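/- arXiv:2011.05953 — 2 statements merged into one kernel-verified Lean document; each statement's English description precedes it below -/
import Mathlib

section
/- Let f ∈ F₁(a,b) and let Q, P be probability measures on a measurable space (Ω,M). Then D_f(Q‖P) = sup over g ∈ M_b(Ω) of {E_Q[g] − E_P[f*(g)]}, and also D_f(Q‖P) = sup over g ∈ M_b(Ω) of {E_Q[g] − Λ_f^P[g]}. -/
open MeasureTheory Filter Set Topology ENNReal
open scoped Classical

noncomputable section

/-- The set of bounded measurable real-valued functions on `Ω`. -/
def Mb (Ω : Type*) [MeasurableSpace Ω] : Set (Ω → ℝ) :=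
  {g | Measurable g ∧ ∃ C : ℝ, ∀ x, |g x| ≤ C}

/-- The set of bounded continuous real-valued functions on `S`. -/
def Cb (S : Type*) [TopologicalSpace S] : Set (S → ℝ) :=
  {g | Continuous g ∧ ∃ C : ℝ, ∀ x, |g x| ≤ C}

/-- The positive part of an extended real number, as an element of `ℝ≥0∞`. -/
def posE (x : EReal) : ℝ≥0∞ := if x = ⊤ then ⊤ else ENNReal.ofReal x.toReal

/-- The extended-real-valued integral of an `EReal`-valued function, defined as the
difference of the lower integrals of the positive and negative parts, with the
convention `∞ - ∞ = -∞`. -/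
def eIntegral {Ω : Type*} [MeasurableSpace Ω] (P : Measure Ω) (h : Ω → EReal) : EReal :=
  ((∫⁻ x, posE (h x) ∂P : ℝ≥0∞) : EReal) - ((∫⁻ x, posE (-(h x)) ∂P : ℝ≥0∞) : EReal)

/-- The Legendre transform `f*(y) = sup_x {x*y - f(x)}` of `f : ℝ → (-∞,∞]`. -/
def fstar (f : ℝ → EReal) (y : ℝ) : EReal := ⨆ x : ℝ, (((x * y : ℝ) : EReal) - f x)

/-- `f : ℝ → (-∞,∞]` is (the convex LSC extension of) an element of `F₁(a,b)`:
convex, lower semicontinuous, never `-∞`, finite exactly on the interval `(a,b)`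
(with `+∞` strictly outside `[a,b]`), and `f(1) = 0` with `a < 1 < b`. -/
structure IsF1 (a b : EReal) (f : ℝ → EReal) : Prop where
  a_lt_one : a < ((1 : ℝ) : EReal)
  one_lt_b : ((1 : ℝ) : EReal) < b
  convex : ∀ x y t : ℝ, 0 < t → t < 1 →
    f (t * x + (1 - t) * y) ≤ ((t : ℝ) : EReal) * f x + (((1 - t : ℝ)) : EReal) * f y
  lsc : LowerSemicontinuous f
  ne_bot : ∀ x, f x ≠ ⊥
  finite_on : ∀ x : ℝ, a < (x : EReal) → (x : EReal) < b → f x ≠ ⊤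
  top_outside : ∀ x : ℝ, ((x : EReal) < a ∨ b < (x : EReal)) → f x = ⊤
  at_one : f 1 = 0

/-- `Λ_f^P[g] = inf_{ν ∈ ℝ} {ν + E_P[f*(g - ν)]}`. -/
def LambdaF {Ω : Type*} [MeasurableSpace Ω] (f : ℝ → EReal) (P : Measure Ω) (g : Ω → ℝ) :
    EReal :=
  ⨅ ν : ℝ, ((ν : EReal) + eIntegral P (fun x => fstar f (g x - ν)))

/-- The classical `f`-divergence `D_f(Q‖P) = E_P[f(dQ/dP)]` if `Q ≪ P`, else `∞`. -/
def fDivE {Ω : Type*} [MeasurableSpace Ω] (f : ℝ → EReal) (Q P : Measure Ω) : EReal :=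
  if Q ≪ P then eIntegral P (fun x => f ((Q.rnDeriv P x).toReal)) else ⊤

/-- The `(f,Γ)`-divergence `D_f^Γ(Q‖P) = sup_{g ∈ Γ} {E_Q[g] - Λ_f^P[g]}`. -/
def fGammaDiv {Ω : Type*} [MeasurableSpace Ω] (f : ℝ → EReal) (Γ : Set (Ω → ℝ))
    (Q P : Measure Ω) : EReal :=
  ⨆ g ∈ Γ, (((∫ x, g x ∂Q : ℝ) : EReal) - LambdaF f P g)

/-- The `Γ`-IPM `W^Γ(Q,P) = sup_{g ∈ Γ} {E_Q[g] - E_P[g]}`. -/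
def ipmW {Ω : Type*} [MeasurableSpace Ω] (Γ : Set (Ω → ℝ)) (Q P : Measure Ω) : EReal :=
  ⨆ g ∈ Γ, (((∫ x, g x ∂Q : ℝ) : EReal) - ((∫ x, g x ∂P : ℝ) : EReal))

end

/-!
Weak duality is Young's inequality `x y ≤ f x + f* y` at `x = dQ/dP`, integrated against `P`.
Conversely, separating points from the closed convex epigraph of `f` shows that `f` is the
supremum of its affine minorants, and since `ℝ²` is separable, of countably many of them,
`x ↦ x yₙ - cₙ`. Choosing at each point the best of the first `N + 1` minorants gives bounded
test functions `g_N = y_{k_N(dQ/dP)}` with `f*(g_N) ≤ c_{k_N}`, so that `E_Q g_N - E_P f*(g_N)`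
dominates `E_P` of an increasing sequence converging to `f(dQ/dP)`. If `Q` is not absolutely
continuous, test functions that are large on a `P`-null set charged by `Q` make the supremum
infinite. The second formula follows because `Λ_f^P[g] ≤ E_P f*(g)` (take `ν = 0`), while
`E_Q g - Λ_f^P[g]` is the supremum over `ν` of the first expression at `g - ν`.
-/

namespace EReal

lemma continuous_coe_sub_const (c : EReal) : Continuous fun r : ℝ => (r : EReal) - c :=
  continuous_iff_continuousAt.2 fun r =>
    (continuousAt_add (p := ((r : EReal), -c)) (.inl (coe_ne_top r)) (.inl (coe_ne_bot r))).comp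
      (f := fun r : ℝ => ((r : EReal), -c))
      (continuous_coe_real_ereal.prodMk continuous_const).continuousAt

lemma continuous_coe_sub (r : ℝ) : Continuous fun x : EReal => (r : EReal) - x :=
  continuous_iff_continuousAt.2 fun x =>
    (continuousAt_add (p := ((r : EReal), -x)) (.inl (coe_ne_top r)) (.inl (coe_ne_bot r))).comp
      (f := fun x : EReal => ((r : EReal), -x))
      (continuous_const.prodMk continuous_neg).continuousAt

lemma coe_toReal_sub_one_lt {x : EReal} (hx : x ≠ ⊤) (h'x : x ≠ ⊥) :
    ((x.toReal - 1 : ℝ) : EReal) < x := by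
  conv_rhs => rw [← coe_toReal hx h'x]
  exact EReal.coe_lt_coe_iff.2 (sub_one_lt _)

lemma coe_sub_iInf {ι : Sort*} (r : ℝ) (t : ι → EReal) :
    (r : EReal) - ⨅ i, t i = ⨆ i, ((r : EReal) - t i) :=
  Antitone.map_iInf_of_continuousAt (f := fun x : EReal => (r : EReal) - x)
    (continuous_coe_sub r).continuousAt (fun _ _ h => sub_le_sub le_rfl h) (sub_top _)

lemma coe_sub_coe_add (r ν : ℝ) (e : EReal) :
    (r : EReal) - (ν + e) = ((r - ν : ℝ) : EReal) - e := by
  rw [sub_eq_add_neg, EReal.neg_add (.inl (coe_ne_bot ν)) (.inl (coe_ne_top ν)),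
    sub_eq_add_neg, ← add_assoc, ← sub_eq_add_neg, ← coe_neg, ← coe_add, ← sub_eq_add_neg]

lemma ofReal_add_toENNReal_neg_le {t : ℝ} {a b : EReal} (h : (t : EReal) ≤ a + b) :
    ENNReal.ofReal t + (-a).toENNReal + (-b).toENNReal
      ≤ a.toENNReal + b.toENNReal + ENNReal.ofReal (-t) := by
  induction a with
  | bot => simp at h
  | top => simp
  | coe a =>
    induction b with
    | bot => simp at h
    | top => simp
    | coe b =>
      rw [← coe_ennreal_le_coe_ennreal_iff]
      simp only [← coe_neg, real_coe_toENNReal, coe_ennreal_add, coe_ennreal_ofReal]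
      norm_cast at h ⊢
      grind

lemma coe_ennreal_sub_le_add_sub_of_add_le {A B C D E F : ℝ≥0∞} (hB : B ≠ ⊤) (hD : D ≠ ⊤)
    (hF : F ≠ ⊤) (h : A + D + F ≤ C + E + B) :
    (A : EReal) - B ≤ ((C : EReal) - D) + ((E : EReal) - F) := by
  lift B to NNReal using hB
  lift D to NNReal using hD
  lift F to NNReal using hF
  simp only [coe_nnreal_eq_coe_real]
  have sub_ne_bot (X : ℝ≥0∞) (r : ℝ) : (X : EReal) - r ≠ ⊥ := by
    rw [sub_eq_add_neg, ← coe_neg]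
    exact add_ne_bot_iff.2 ⟨coe_ennreal_ne_bot X, coe_ne_bot _⟩
  rcases eq_or_ne C ⊤ with rfl | hC
  · rw [coe_ennreal_top, top_sub_coe, top_add_of_ne_bot (sub_ne_bot _ _)]
    exact le_top
  rcases eq_or_ne E ⊤ with rfl | hE
  · rw [coe_ennreal_top, top_sub_coe, add_top_of_ne_bot (sub_ne_bot _ _)]
    exact le_top
  have hA : A ≤ C + E + B := (le_self_add.trans le_self_add).trans h
  lift C to NNReal using hC
  lift E to NNReal using hE
  lift A to NNReal using ne_top_of_le_ne_top (by simp) hA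
  simp only [coe_nnreal_eq_coe_real, ← coe_sub, ← coe_add, EReal.coe_le_coe_iff]
  norm_cast at h
  rw [← NNReal.coe_le_coe] at h
  push_cast at h
  linarith

end EReal

section ExtendedIntegral

variable {Ω : Type*} [MeasurableSpace Ω] {P : Measure Ω}

lemma eIntegral_eq_sub (P : Measure Ω) (h : Ω → EReal) :
    eIntegral P h = ((∫⁻ x, (h x).toENNReal ∂P : ℝ≥0∞) : EReal)
      - ((∫⁻ x, (-h x).toENNReal ∂P : ℝ≥0∞) : EReal) := rfl

lemma eIntegral_mono_ae {h k : Ω → EReal} (hhk : ∀ᵐ x ∂P, h x ≤ k x) :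
    eIntegral P h ≤ eIntegral P k := by
  rw [eIntegral_eq_sub, eIntegral_eq_sub]
  refine EReal.sub_le_sub (EReal.coe_ennreal_le_coe_ennreal_iff.2 (lintegral_mono_ae ?_))
    (EReal.coe_ennreal_le_coe_ennreal_iff.2 (lintegral_mono_ae ?_))
  · exact hhk.mono fun x hx => EReal.toENNReal_le_toENNReal hx
  · exact hhk.mono fun x hx => EReal.toENNReal_le_toENNReal (EReal.neg_le_neg_iff.2 hx)

lemma eIntegral_coe {u : Ω → ℝ} (hu : Integrable u P) :
    eIntegral P (fun x => (u x : EReal)) = ((∫ x, u x ∂P : ℝ) : EReal) := by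
  have hneg : ∫⁻ x, ENNReal.ofReal (-u x) ∂P ≠ ⊤ := hu.neg.lintegral_lt_top.ne
  simp only [eIntegral_eq_sub, ← EReal.coe_neg, EReal.real_coe_toENNReal]
  rw [integral_eq_lintegral_pos_part_sub_lintegral_neg_part hu, EReal.coe_sub,
    EReal.coe_ennreal_toReal hu.lintegral_lt_top.ne, EReal.coe_ennreal_toReal hneg]

lemma eIntegral_const [IsProbabilityMeasure P] (r : ℝ) :
    eIntegral P (fun _ => (r : EReal)) = r := by
  rw [eIntegral_coe (integrable_const r), integral_const, probReal_univ, one_smul]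

lemma lintegral_toENNReal_neg_ne_top {u : Ω → EReal} {l : Ω → ℝ} (hl : Integrable l P)
    (h : ∀ x, (l x : EReal) ≤ u x) : ∫⁻ x, (-u x).toENNReal ∂P ≠ ⊤ :=
  ne_top_of_le_ne_top hl.neg.lintegral_lt_top.ne (lintegral_mono fun x =>
    (EReal.toENNReal_le_toENNReal (EReal.neg_le_neg_iff.2 (h x))).trans_eq rfl)

lemma integral_le_eIntegral_add {w : Ω → ℝ} {u v : Ω → EReal} (hw : Integrable w P)
    (hu : Measurable u) (hv : Measurable v) (hu_neg : ∫⁻ x, (-u x).toENNReal ∂P ≠ ⊤)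
    (hv_neg : ∫⁻ x, (-v x).toENNReal ∂P ≠ ⊤) (h : ∀ x, (w x : EReal) ≤ u x + v x) :
    ((∫ x, w x ∂P : ℝ) : EReal) ≤ eIntegral P u + eIntegral P v := by
  have hw_neg : ∫⁻ x, ENNReal.ofReal (-w x) ∂P ≠ ⊤ := hw.neg.lintegral_lt_top.ne
  rw [← eIntegral_coe hw, eIntegral_eq_sub, eIntegral_eq_sub, eIntegral_eq_sub]
  simp only [← EReal.coe_neg, EReal.real_coe_toENNReal]
  refine EReal.coe_ennreal_sub_le_add_sub_of_add_le hw_neg hu_neg hv_neg ?_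
  have hw_pos : AEMeasurable (fun x => ENNReal.ofReal (w x)) P := hw.aemeasurable.ennreal_ofReal
  have hu_neg_m : Measurable fun x => (-u x).toENNReal := hu.neg.ereal_toENNReal
  calc _ = ∫⁻ x, ENNReal.ofReal (w x) + (-u x).toENNReal + (-v x).toENNReal ∂P := by
        rw [lintegral_add_left' (hw_pos.fun_add hu_neg_m.aemeasurable),
          lintegral_add_left' hw_pos]
    _ ≤ ∫⁻ x, (u x).toENNReal + (v x).toENNReal + ENNReal.ofReal (-w x) ∂P :=
        lintegral_mono fun x => EReal.ofReal_add_toENNReal_neg_le (h x)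
    _ = _ := by
        rw [lintegral_add_left (hu.ereal_toENNReal.fun_add hv.ereal_toENNReal),
          lintegral_add_left hu.ereal_toENNReal]

lemma tendsto_eIntegral_of_monotone {h : ℕ → Ω → EReal} {H : Ω → EReal}
    (hm : ∀ n, Measurable (h n)) (hmono : ∀ x, Monotone fun n => h n x)
    (hlim : ∀ x, Tendsto (fun n => h n x) atTop (𝓝 (H x)))
    (hneg : ∫⁻ x, (-h 0 x).toENNReal ∂P ≠ ⊤) :
    Tendsto (fun n => eIntegral P (h n)) atTop (𝓝 (eIntegral P H)) := by
  have hpos : Tendsto (fun n => ∫⁻ x, (h n x).toENNReal ∂P) atTop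
      (𝓝 (∫⁻ x, (H x).toENNReal ∂P)) :=
    lintegral_tendsto_of_tendsto_of_monotone (fun n => (hm n).ereal_toENNReal.aemeasurable)
      (ae_of_all _ fun x _ _ hij => EReal.toENNReal_le_toENNReal (hmono x hij))
      (ae_of_all _ fun x => (EReal.continuous_toENNReal.tendsto _).comp (hlim x))
  have hnegt : Tendsto (fun n => ∫⁻ x, (-h n x).toENNReal ∂P) atTop
      (𝓝 (∫⁻ x, (-H x).toENNReal ∂P)) :=
    lintegral_tendsto_of_tendsto_of_antitone
      (fun n => (hm n).neg.ereal_toENNReal.aemeasurable)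
      (ae_of_all _ fun x _ _ hij =>
        EReal.toENNReal_le_toENNReal (EReal.neg_le_neg_iff.2 (hmono x hij))) hneg
      (ae_of_all _ fun x =>
        (EReal.continuous_toENNReal.tendsto _).comp ((continuous_neg.tendsto _).comp (hlim x)))
  have hfin : ∫⁻ x, (-H x).toENNReal ∂P ≠ ⊤ :=
    ne_top_of_le_ne_top hneg (lintegral_mono fun x => EReal.toENNReal_le_toENNReal
      (EReal.neg_le_neg_iff.2 ((hmono x).ge_of_tendsto (hlim x) 0)))
  have hsub : ContinuousAt (fun p : EReal × EReal => p.1 - p.2)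
      (((∫⁻ x, (H x).toENNReal ∂P : ℝ≥0∞) : EReal), ((∫⁻ x, (-H x).toENNReal ∂P : ℝ≥0∞))) := by
    refine (EReal.continuousAt_add (p := (_, _)) (.inr ?_) (.inl ?_)).comp
      (f := fun p : EReal × EReal => (p.1, -p.2)) (by fun_prop)
    · simpa using hfin
    · simp
  simp only [eIntegral_eq_sub]
  exact hsub.tendsto.comp ((continuous_coe_ennreal_ereal.tendsto _).comp hpos |>.prodMk_nhds
    ((continuous_coe_ennreal_ereal.tendsto _).comp hnegt))

end ExtendedIntegral

def IsAffineMinorant (f : ℝ → EReal) (y c : ℝ) : Prop :=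
  ∀ x : ℝ, ((x * y - c : ℝ) : EReal) ≤ f x

section LegendreTransform

variable {f : ℝ → EReal}

lemma coe_mul_sub_le_fstar (f : ℝ → EReal) (x y : ℝ) :
    ((x * y : ℝ) : EReal) - f x ≤ fstar f y :=
  le_iSup (fun x : ℝ => ((x * y : ℝ) : EReal) - f x) x

lemma coe_le_fstar (hf : f 1 = 0) (y : ℝ) : (y : EReal) ≤ fstar f y := by
  simpa [hf] using coe_mul_sub_le_fstar f 1 y

lemma fstar_ne_bot (hf : f 1 = 0) (y : ℝ) : fstar f y ≠ ⊥ :=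
  ne_bot_of_le_ne_bot (EReal.coe_ne_bot y) (coe_le_fstar hf y)

lemma coe_mul_le_add_fstar {x y : ℝ} (hx : f x ≠ ⊥) (hy : fstar f y ≠ ⊥) :
    ((x * y : ℝ) : EReal) ≤ f x + fstar f y := by
  rw [add_comm]
  exact (EReal.sub_le_iff_le_add (.inl hx) (.inr hy)).1 (coe_mul_sub_le_fstar f x y)

lemma IsAffineMinorant.ne_bot {y c : ℝ} (h : IsAffineMinorant f y c) (x : ℝ) : f x ≠ ⊥ :=
  ne_bot_of_le_ne_bot (EReal.coe_ne_bot _) (h x)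

lemma IsAffineMinorant.fstar_le {y c : ℝ} (h : IsAffineMinorant f y c) : fstar f y ≤ c := by
  refine iSup_le fun x => EReal.sub_le_of_le_add ?_
  calc ((x * y : ℝ) : EReal) = c + ((x * y - c : ℝ) : EReal) := by norm_cast; ring
    _ ≤ c + f x := add_le_add_right (h x) _

lemma measurable_fstar (f : ℝ → EReal) : Measurable (fstar f) :=
  (lowerSemicontinuous_iSup fun x => ((EReal.continuous_coe_sub_const (f x)).comp
    (continuous_const_mul x)).lowerSemicontinuous).measurable

end LegendreTransform

def IsConvexEReal (f : ℝ → EReal) : Prop :=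
  ∀ x y t : ℝ, 0 < t → t < 1 →
    f (t * x + (1 - t) * y) ≤ ((t : ℝ) : EReal) * f x + (((1 - t : ℝ)) : EReal) * f y

section FenchelMoreau

variable {f : ℝ → EReal}

lemma IsConvexEReal.convex_epigraph (hconv : IsConvexEReal f) :
    Convex ℝ {p : ℝ × ℝ | f p.1 ≤ p.2} := by
  refine convex_iff_forall_pos.2 fun p hp q hq a b ha hb hab => ?_
  obtain rfl : b = 1 - a := by linarith
  simp only [mem_ofPred_eq] at hp hq ⊢
  calc f (a * p.1 + (1 - a) * q.1) ≤ ((a : ℝ) : EReal) * f p.1 + ((1 - a : ℝ) : EReal) * f q.1 :=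
        hconv _ _ a ha (by linarith)
    _ ≤ ((a : ℝ) : EReal) * p.2 + ((1 - a : ℝ) : EReal) * q.2 := by gcongr
    _ = ((a • p + (1 - a) • q).2 : ℝ) := by simp

lemma LowerSemicontinuous.isClosed_epigraph_real (hlsc : LowerSemicontinuous f) :
    IsClosed {p : ℝ × ℝ | f p.1 ≤ p.2} :=
  hlsc.isClosed_epigraph.preimage
    (continuous_fst.prodMk (continuous_coe_real_ereal.comp continuous_snd))

lemma exists_separating_line_of_lt (hconv : IsConvexEReal f) (hlsc : LowerSemicontinuous f)
    {x₁ : ℝ} (hx₁ : f x₁ ≠ ⊤) {x₀ t₀ : ℝ} (h : (t₀ : EReal) < f x₀) :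
    ∃ α β u : ℝ, β ≤ 0 ∧ (∀ x, f x ≠ ⊤ → α * x + β * (f x).toReal < u) ∧
      u < α * x₀ + β * t₀ := by
  obtain ⟨l, u, hl, hlu⟩ := geometric_hahn_banach_closed_point hconv.convex_epigraph
    hlsc.isClosed_epigraph_real (x := (x₀, t₀)) (by simpa using h)
  have hl_apply (p : ℝ × ℝ) : l p = l (1, 0) * p.1 + l (0, 1) * p.2 := by
    have hp : p = p.1 • ((1 : ℝ), (0 : ℝ)) + p.2 • ((0 : ℝ), (1 : ℝ)) := by ext <;> simp
    conv_lhs => rw [hp, map_add, map_smul, map_smul, smul_eq_mul, smul_eq_mul]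
    ring
  have mem_epigraph {x : ℝ} (hx : f x ≠ ⊤) {t : ℝ} (ht : (f x).toReal ≤ t) :
      l (1, 0) * x + l (0, 1) * t < u :=
    hl_apply (x, t) ▸ hl (x, t) ((EReal.le_coe_toReal hx).trans (EReal.coe_le_coe_iff.2 ht))
  refine ⟨l (1, 0), l (0, 1), u, ?_, fun x hx => mem_epigraph hx le_rfl, hl_apply (x₀, t₀) ▸ hlu⟩
  -- the epigraph contains the vertical half-line above `(x₁, f x₁)`
  by_contra! hβ
  set t := max (f x₁).toReal ((u - l (1, 0) * x₁) / l (0, 1))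
  have := mem_epigraph hx₁ (le_max_left _ _ : (f x₁).toReal ≤ t)
  have : (u - l (1, 0) * x₁) / l (0, 1) ≤ t := le_max_right _ _
  rw [div_le_iff₀ hβ] at this
  linarith

lemma IsAffineMinorant.of_forall_ne_top (hbot : ∀ x, f x ≠ ⊥) {y c : ℝ}
    (h : ∀ x, f x ≠ ⊤ → x * y - c ≤ (f x).toReal) : IsAffineMinorant f y c := by
  intro x
  by_cases hx : f x = ⊤
  · simp [hx]
  · rw [← EReal.coe_toReal hx (hbot x)]
    exact_mod_cast h x hx

lemma IsAffineMinorant.add_mul {y c : ℝ} (h : IsAffineMinorant f y c) {α u k : ℝ} (hk : 0 ≤ k)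
    (hαu : ∀ x, f x ≠ ⊤ → α * x ≤ u) : IsAffineMinorant f (y + k * α) (c + k * u) := by
  intro x
  by_cases hx : f x = ⊤
  · simp [hx]
  have : k * (α * x - u) ≤ 0 := mul_nonpos_of_nonneg_of_nonpos hk (by linarith [hαu x hx])
  calc ((x * (y + k * α) - (c + k * u) : ℝ) : EReal) ≤ ((x * y - c : ℝ) : EReal) := by
        exact_mod_cast (by linarith)
    _ ≤ f x := h x

lemma exists_isAffineMinorant_gt (hconv : IsConvexEReal f) (hlsc : LowerSemicontinuous f)
    (hbot : ∀ x, f x ≠ ⊥) {x₁ : ℝ} (hx₁ : f x₁ ≠ ⊤) {x₀ t₀ : ℝ} (h : (t₀ : EReal) < f x₀) :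
    ∃ y c, IsAffineMinorant f y c ∧ t₀ < x₀ * y - c := by
  have of_neg {α β u x t : ℝ} (hβ : β < 0) (hsep : ∀ z, f z ≠ ⊤ → α * z + β * (f z).toReal < u)
      (hlt : u < α * x + β * t) : ∃ y c, IsAffineMinorant f y c ∧ t < x * y - c := by
    have hval (z : ℝ) : z * (-α / β) - (-u / β) = (u - α * z) / β := by field_simp; ring
    refine ⟨-α / β, -u / β, .of_forall_ne_top hbot fun z hz => ?_, ?_⟩
    · rw [hval, div_le_iff_of_neg hβ]
      linarith [hsep z hz]
    · rw [hval, lt_div_iff_of_neg hβ]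
      linarith
  obtain ⟨α₁, β₁, u₁, hβ₁, hsep₁, hlt₁⟩ := exists_separating_line_of_lt hconv hlsc hx₁
    (x₀ := x₁) (t₀ := (f x₁).toReal - 1)
    (EReal.coe_toReal_sub_one_lt hx₁ (hbot x₁))
  have hβ₁' : β₁ ≠ 0 := by
    rintro rfl
    linarith [hsep₁ x₁ hx₁]
  obtain ⟨y₁, c₁, hmin₁, -⟩ := of_neg (hβ₁.lt_of_ne hβ₁') hsep₁ hlt₁
  obtain ⟨α, β, u, hβ, hsep, hlt⟩ := exists_separating_line_of_lt hconv hlsc hx₁ h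
  rcases hβ.lt_or_eq with hβ | rfl
  · exact of_neg hβ hsep hlt
  -- a vertical separating line: tilt the minorant `(y₁, c₁)` along it
  simp only [zero_mul, add_zero] at hsep hlt
  obtain ⟨k, hk⟩ := exists_nat_gt ((t₀ - (x₀ * y₁ - c₁)) / (α * x₀ - u))
  rw [div_lt_iff₀ (by linarith)] at hk
  exact ⟨y₁ + k * α, c₁ + k * u, hmin₁.add_mul k.cast_nonneg fun x hx => (hsep x hx).le,
    by linarith⟩

lemma exists_seq_isAffineMinorant_iSup_eq (hconv : IsConvexEReal f)
    (hlsc : LowerSemicontinuous f) (hbot : ∀ x, f x ≠ ⊥) {x₁ : ℝ} (hx₁ : f x₁ ≠ ⊤) :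
    ∃ y c : ℕ → ℝ, (∀ n, IsAffineMinorant f (y n) (c n)) ∧
      ∀ x, ⨆ n, ((x * y n - c n : ℝ) : EReal) = f x := by
  set A := {p : ℝ × ℝ | IsAffineMinorant f p.1 p.2}
  obtain ⟨T, hTA, hTc, hAT⟩ :=
    (TopologicalSpace.IsSeparable.of_separableSpace A).exists_countable_dense_subset
  obtain ⟨y₁, c₁, hmin₁, -⟩ := exists_isAffineMinorant_gt hconv hlsc hbot hx₁ (x₀ := x₁)
    (t₀ := (f x₁).toReal - 1)
    (EReal.coe_toReal_sub_one_lt hx₁ (hbot x₁))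
  obtain ⟨e, rfl⟩ := hTc.exists_eq_range
    (closure_nonempty_iff.1 ⟨_, hAT (show (y₁, c₁) ∈ A from hmin₁)⟩)
  refine ⟨fun n => (e n).1, fun n => (e n).2, fun n => hTA (mem_range_self n), fun x =>
    le_antisymm (iSup_le fun n => hTA (mem_range_self n) x) ?_⟩
  refine EReal.ge_of_forall_gt_iff_ge.1 fun t ht => ?_
  obtain ⟨y, c, hyc, hlt⟩ := exists_isAffineMinorant_gt hconv hlsc hbot hx₁ ht
  set S := ⨆ n, ((x * (e n).1 - (e n).2 : ℝ) : EReal)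
  -- the value at `x` is a continuous function of the minorant, and `range e` is dense in `A`
  set B := {p : ℝ × ℝ | ((x * p.1 - p.2 : ℝ) : EReal) ≤ S}
  have hB : IsClosed B :=
    isClosed_le (continuous_coe_real_ereal.comp (by fun_prop)) continuous_const
  have heB : range e ⊆ B := by
    rintro _ ⟨n, rfl⟩
    exact le_iSup (fun n => ((x * (e n).1 - (e n).2 : ℝ) : EReal)) n
  have hycB : (y, c) ∈ B := closure_minimal heB hB (hAT (show (y, c) ∈ A from hyc))
  exact (EReal.coe_le_coe_iff.2 hlt.le).trans hycB

end FenchelMoreau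

noncomputable def argmaxIndex (y c : ℕ → ℝ) (r : ℝ) : ℕ → ℕ
  | 0 => 0
  | N + 1 =>
    if r * y (argmaxIndex y c r N) - c (argmaxIndex y c r N) < r * y (N + 1) - c (N + 1) then N + 1
    else argmaxIndex y c r N

section ArgmaxIndex

variable {y c : ℕ → ℝ}

lemma argmaxIndex_le (r : ℝ) (N : ℕ) : argmaxIndex y c r N ≤ N := by
  induction N with
  | zero => rfl
  | succ N ih =>
    rw [argmaxIndex]
    split_ifs
    exacts [le_rfl, ih.trans N.le_succ]

lemma le_argmaxIndex (r : ℝ) {n N : ℕ} (hn : n ≤ N) :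
    r * y n - c n ≤ r * y (argmaxIndex y c r N) - c (argmaxIndex y c r N) := by
  induction N with
  | zero => rw [Nat.le_zero.1 hn]; rfl
  | succ N ih =>
    rw [argmaxIndex]
    split_ifs with h
    · rcases hn.eq_or_lt with rfl | hn
      · exact le_rfl
      · exact (ih (Nat.le_of_lt_succ hn)).trans h.le
    · rcases hn.eq_or_lt with rfl | hn
      · exact not_lt.1 h
      · exact ih (Nat.le_of_lt_succ hn)

lemma monotone_argmaxIndex (r : ℝ) :
    Monotone fun N => r * y (argmaxIndex y c r N) - c (argmaxIndex y c r N) :=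
  fun _ _ hNM => le_argmaxIndex r ((argmaxIndex_le r _).trans hNM)

lemma iSup_argmaxIndex (r : ℝ) :
    ⨆ N, ((r * y (argmaxIndex y c r N) - c (argmaxIndex y c r N) : ℝ) : EReal)
      = ⨆ n, ((r * y n - c n : ℝ) : EReal) :=
  le_antisymm (iSup_le fun _ => le_iSup (fun n => ((r * y n - c n : ℝ) : EReal)) _)
    (iSup_mono fun _ => EReal.coe_le_coe_iff.2 (le_argmaxIndex r le_rfl))

lemma measurable_argmaxIndex (N : ℕ) : Measurable fun r => argmaxIndex y c r N := by
  induction N with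
  | zero => exact measurable_const
  | succ N ih =>
    simp only [argmaxIndex]
    refine Measurable.ite (measurableSet_lt ?_ (by fun_prop)) measurable_const ih
    exact (measurable_id.mul ((measurable_from_nat (f := y)).comp ih)).sub
      ((measurable_from_nat (f := c)).comp ih)

end ArgmaxIndex

section Duality

variable {Ω : Type*} [MeasurableSpace Ω] {P Q : Measure Ω} {f : ℝ → EReal}

lemma integrable_of_mem_Mb [IsFiniteMeasure P] {g : Ω → ℝ} (hg : g ∈ Mb Ω) : Integrable g P :=
  let ⟨C, hC⟩ := hg.2
  (integrable_const C).mono' hg.1.aestronglyMeasurable (ae_of_all _ hC)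

lemma integrable_toReal_rnDeriv_mul [IsFiniteMeasure Q] {g : Ω → ℝ} (hg : g ∈ Mb Ω) :
    Integrable (fun x => (Q.rnDeriv P x).toReal * g x) P :=
  let ⟨_, hC⟩ := hg.2
  Measure.integrable_toReal_rnDeriv.mul_bdd hg.1.aestronglyMeasurable (ae_of_all _ hC)

lemma integral_eq_integral_toReal_rnDeriv_mul [SigmaFinite Q] [SigmaFinite P] (hQP : Q ≪ P)
    (g : Ω → ℝ) : ∫ x, g x ∂Q = ∫ x, (Q.rnDeriv P x).toReal * g x ∂P :=
  (integral_rnDeriv_smul hQP).symm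

lemma coe_integral_sub_eIntegral_fstar_le [IsFiniteMeasure P] [IsFiniteMeasure Q] (hQP : Q ≪ P)
    (hfm : Measurable f) (hf : f 1 = 0) {y₀ c₀ : ℝ} (hmin : IsAffineMinorant f y₀ c₀)
    {g : Ω → ℝ} (hg : g ∈ Mb Ω) :
    ((∫ x, g x ∂Q : ℝ) : EReal) - eIntegral P (fun x => fstar f (g x))
      ≤ eIntegral P (fun x => f (Q.rnDeriv P x).toReal) := by
  have hφ : Integrable (fun x => (Q.rnDeriv P x).toReal) P := Measure.integrable_toReal_rnDeriv
  refine EReal.sub_le_of_le_add ?_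
  rw [integral_eq_integral_toReal_rnDeriv_mul hQP]
  refine integral_le_eIntegral_add (integrable_toReal_rnDeriv_mul hg)
    (hfm.comp (Measure.measurable_rnDeriv Q P).ennreal_toReal) ((measurable_fstar f).comp hg.1)
    (lintegral_toENNReal_neg_ne_top ((hφ.mul_const y₀).sub (integrable_const c₀)) fun _ => hmin _)
    (lintegral_toENNReal_neg_ne_top (integrable_of_mem_Mb hg) fun _ => coe_le_fstar hf _)
    fun _ => coe_mul_le_add_fstar (hmin.ne_bot _) (fstar_ne_bot hf _)

lemma comp_argmaxIndex_mem_Mb {φ : Ω → ℝ} (hφ : Measurable φ) (y c z : ℕ → ℝ) (N : ℕ) :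
    (fun ω => z (argmaxIndex y c (φ ω) N)) ∈ Mb Ω :=
  ⟨measurable_from_nat.comp ((measurable_argmaxIndex N).comp hφ),
    ∑ n ∈ Finset.range (N + 1), |z n|, fun _ => Finset.single_le_sum (f := fun n => |z n|)
      (fun _ _ => abs_nonneg _) (Finset.mem_range_succ_iff.2 (argmaxIndex_le _ N))⟩

lemma eIntegral_le_iSup_sub_eIntegral_fstar [IsFiniteMeasure P] [IsFiniteMeasure Q]
    (hQP : Q ≪ P) {y c : ℕ → ℝ} (hmin : ∀ n, IsAffineMinorant f (y n) (c n))
    (hsup : ∀ x, ⨆ n, ((x * y n - c n : ℝ) : EReal) = f x) :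
    eIntegral P (fun x => f (Q.rnDeriv P x).toReal)
      ≤ ⨆ g ∈ Mb Ω, (((∫ x, g x ∂Q : ℝ) : EReal) - eIntegral P (fun x => fstar f (g x))) := by
  set φ : Ω → ℝ := fun x => (Q.rnDeriv P x).toReal
  have hφ : Measurable φ := (Measure.measurable_rnDeriv Q P).ennreal_toReal
  set k : ℕ → Ω → ℕ := fun N ω => argmaxIndex y c (φ ω) N
  have hy N : (fun ω => y (k N ω)) ∈ Mb Ω := comp_argmaxIndex_mem_Mb hφ y c y N
  have hc N : (fun ω => c (k N ω)) ∈ Mb Ω := comp_argmaxIndex_mem_Mb hφ y c c N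
  -- `U N ω` is the largest of the first `N + 1` affine minorants at `φ ω`
  set U : ℕ → Ω → ℝ := fun N ω => φ ω * y (k N ω) - c (k N ω)
  have hU N : Integrable (U N) P :=
    (integrable_toReal_rnDeriv_mul (hy N)).sub (integrable_of_mem_Mb (hc N))
  have hmono ω : Monotone fun N => ((U N ω : ℝ) : EReal) :=
    fun _ _ h => EReal.coe_le_coe_iff.2 (monotone_argmaxIndex (φ ω) h)
  have hlim : Tendsto (fun N => eIntegral P fun ω => (U N ω : EReal)) atTop
      (𝓝 (eIntegral P fun ω => f (φ ω))) := by
    refine tendsto_eIntegral_of_monotone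
      (fun N => measurable_coe_real_ereal.comp ((hφ.mul (hy N).1).sub (hc N).1)) hmono
      (fun ω => ?_) (lintegral_toENNReal_neg_ne_top (hU 0) fun _ => le_rfl)
    rw [← hsup, ← iSup_argmaxIndex]
    exact tendsto_atTop_iSup (hmono ω)
  refine le_of_tendsto' hlim fun N => le_iSup₂_of_le _ (hy N) ?_
  rw [eIntegral_coe (hU N), integral_sub (integrable_toReal_rnDeriv_mul (hy N))
    (integrable_of_mem_Mb (hc N)), ← integral_eq_integral_toReal_rnDeriv_mul hQP, EReal.coe_sub]
  refine EReal.sub_le_sub le_rfl ((eIntegral_mono_ae (ae_of_all _ fun _ => ?_)).trans_eq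
    (eIntegral_coe (integrable_of_mem_Mb (hc N))))
  exact (hmin _).fstar_le

lemma iSup_sub_eIntegral_fstar_eq_top [IsProbabilityMeasure P] [IsProbabilityMeasure Q]
    (hQP : ¬ Q ≪ P) {y₀ c₀ : ℝ} (hmin : IsAffineMinorant f y₀ c₀) :
    ⨆ g ∈ Mb Ω, (((∫ x, g x ∂Q : ℝ) : EReal) - eIntegral P (fun x => fstar f (g x))) = ⊤ := by
  obtain ⟨s, hs, hPs, hQs⟩ : ∃ s, MeasurableSet s ∧ P s = 0 ∧ Q s ≠ 0 := by
    by_contra! h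
    exact hQP (Measure.AbsolutelyContinuous.mk h)
  have hq : 0 < Q.real s := ENNReal.toReal_pos hQs (measure_ne_top Q s)
  refine (EReal.eq_top_iff_forall_lt _).2 fun r => ?_
  obtain ⟨n, hn⟩ := exists_nat_gt ((r - y₀ + c₀) / Q.real s)
  rw [div_lt_iff₀ hq] at hn
  -- raise the test function by `n` on a `P`-null set that `Q` charges
  set g : Ω → ℝ := fun ω => y₀ + s.indicator (fun _ => (n : ℝ)) ω
  have hg : g ∈ Mb Ω := ⟨measurable_const.add (measurable_const.indicator hs), |y₀| + n, fun ω =>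
    (abs_add_le _ _).trans (add_le_add_right (by
      rw [abs_of_nonneg (indicator_nonneg (fun _ _ => n.cast_nonneg) ω)]
      exact indicator_le_self' (fun _ _ => n.cast_nonneg) ω) _)⟩
  have hgQ : ∫ ω, g ω ∂Q = y₀ + n * Q.real s := by
    rw [integral_add (integrable_const y₀) ((integrable_const (n : ℝ)).indicator hs),
      integral_const, integral_indicator_const _ hs, probReal_univ, one_smul, smul_eq_mul, mul_comm]
  have hgP : eIntegral P (fun ω => fstar f (g ω)) ≤ c₀ := by
    refine (eIntegral_mono_ae ?_).trans_eq (eIntegral_const c₀)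
    filter_upwards [compl_mem_ae_iff.2 hPs] with ω hω
    simpa [g, indicator_of_notMem hω] using hmin.fstar_le
  refine lt_of_lt_of_le ?_ (le_iSup₂_of_le g hg (EReal.sub_le_sub le_rfl hgP))
  rw [hgQ, ← EReal.coe_sub, EReal.coe_lt_coe_iff]
  linarith

lemma sub_const_mem_Mb {g : Ω → ℝ} (hg : g ∈ Mb Ω) (ν : ℝ) : (fun x => g x - ν) ∈ Mb Ω :=
  let ⟨C, hC⟩ := hg.2
  ⟨hg.1.sub measurable_const, C + |ν|, fun x => (abs_sub _ _).trans (add_le_add_left (hC x) _)⟩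

lemma lambdaF_le_eIntegral_fstar (f : ℝ → EReal) (P : Measure Ω) (g : Ω → ℝ) :
    LambdaF f P g ≤ eIntegral P (fun x => fstar f (g x)) :=
  iInf_le_of_le 0 (by simp)

lemma coe_integral_sub_lambdaF_le [IsProbabilityMeasure Q] {g : Ω → ℝ} (hg : g ∈ Mb Ω) :
    ((∫ x, g x ∂Q : ℝ) : EReal) - LambdaF f P g
      ≤ ⨆ g ∈ Mb Ω, (((∫ x, g x ∂Q : ℝ) : EReal) - eIntegral P (fun x => fstar f (g x))) := by
  rw [LambdaF, EReal.coe_sub_iInf]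
  refine iSup_le fun ν => le_iSup₂_of_le _ (sub_const_mem_Mb hg ν) ?_
  rw [EReal.coe_sub_coe_add, integral_sub (integrable_of_mem_Mb hg) (integrable_const ν),
    integral_const, probReal_univ, one_smul]

end Duality

/-- Variational formulas for the classical `f`-divergence:
`D_f(Q‖P) = sup_{g ∈ M_b(Ω)} {E_Q[g] - E_P[f*(g)]} = sup_{g ∈ M_b(Ω)} {E_Q[g] - Λ_f^P[g]}`. -/
theorem stmt0 {Ω : Type*} [MeasurableSpace Ω] (a b : EReal) (f : ℝ → EReal)
    (hf : IsF1 a b f) (Q P : Measure Ω) [IsProbabilityMeasure Q] [IsProbabilityMeasure P] :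
    fDivE f Q P
      = ⨆ g ∈ Mb Ω, (((∫ x, g x ∂Q : ℝ) : EReal) - eIntegral P (fun x => fstar f (g x)))
    ∧ fDivE f Q P
      = ⨆ g ∈ Mb Ω, (((∫ x, g x ∂Q : ℝ) : EReal) - LambdaF f P g) := by
  obtain ⟨y, c, hmin, hsup⟩ := exists_seq_isAffineMinorant_iSup_eq hf.convex hf.lsc hf.ne_bot
    (x₁ := 1) (by simp [hf.at_one])
  have hfDiv : fDivE f Q P
      = ⨆ g ∈ Mb Ω, (((∫ x, g x ∂Q : ℝ) : EReal) - eIntegral P (fun x => fstar f (g x))) := by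
    by_cases hQP : Q ≪ P
    · rw [fDivE, if_pos hQP]
      exact le_antisymm (eIntegral_le_iSup_sub_eIntegral_fstar hQP hmin hsup)
        (iSup₂_le fun g hg => coe_integral_sub_eIntegral_fstar_le hQP hf.lsc.measurable
          hf.at_one (hmin 0) hg)
    · rw [fDivE, if_neg hQP, iSup_sub_eIntegral_fstar_eq_top hQP (hmin 0)]
  refine ⟨hfDiv, hfDiv.trans (le_antisymm ?_ ?_)⟩
  · exact iSup₂_mono fun g _ => EReal.sub_le_sub le_rfl (lambdaF_le_eIntegral_fstar f P g)
  · exact iSup₂_le fun g hg => coe_integral_sub_lambdaF_le hg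
end

section
/- Let f ∈ F₁(a,b) be strictly convex on (a,b) and let P be a probability measure on a measurable space (Ω,M). Then Q ↦ D_f(Q‖P) is strictly convex on the set {Q : D_f(Q‖P) < ∞}: for any two distinct probability measures Q₀, Q₁ with D_f(Q₀‖P) < ∞ and D_f(Q₁‖P) < ∞ and any t ∈ (0,1), D_f(tQ₁ + (1−t)Q₀ ‖ P) < t·D_f(Q₁‖P) + (1−t)·D_f(Q₀‖P). -/
open MeasureTheory Filter Set Topology ENNReal
open scoped Classical

/-- `f` is strictly convex on the interval `(a,b)` (with `a, b ∈ [-∞,∞]`). -/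
def StrictConvexOnAB (a b : EReal) (f : ℝ → EReal) : Prop :=
  ∀ x y t : ℝ, a < (x : EReal) → (x : EReal) < b → a < (y : EReal) → (y : EReal) < b →
    x ≠ y → 0 < t → t < 1 →
    f (t * x + (1 - t) * y) < ((t : ℝ) : EReal) * f x + (((1 - t : ℝ)) : EReal) * f y


/-!
Write `r_Q = dQ/dP`. On its effective domain `{f < ∞}` the function `f` is finite and convex,
and it is strictly convex on `(a, b)`; since every open segment between two distinct points of
the domain lies in `(a, b)`, the midpoint trick makes `f` strictly convex on the whole domain.
The density of the mixture is `t r_{Q₁} + (1 - t) r_{Q₀}`, so pointwise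
`f(r_Q) ≤ t f(r_{Q₁}) + (1 - t) f(r_{Q₀})`, strictly on `{r_{Q₀} ≠ r_{Q₁}}`, which has positive
`P`-measure because `Q₀ ≠ Q₁`. The bound `f(x) ≥ -C |x - 1|` makes the negative parts
integrable, so the three divergences are Bochner integrals and the strict inequality integrates.
-/

theorem StrictConvexOn.of_convexOn_of_openSegment_subset {𝕜 E : Type*} [Field 𝕜] [LinearOrder 𝕜]
    [IsStrictOrderedRing 𝕜] [AddCommGroup E] [Module 𝕜 E] {D S : Set E} {F : E → 𝕜}
    (hD : ConvexOn 𝕜 D F) (hS : StrictConvexOn 𝕜 S F)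
    (hseg : ∀ x ∈ D, ∀ y ∈ D, x ≠ y → openSegment 𝕜 x y ⊆ S) : StrictConvexOn 𝕜 D F := by
  refine ⟨hD.1, fun x hx y hy hxy s t hs ht hst => ?_⟩
  obtain rfl : t = 1 - s := by linear_combination hst
  set m := s • x + (1 - s) • y
  have hm : m ∈ D := hD.1 hx hy hs.le ht.le hst
  -- `m` is the `s`-combination of the midpoints `u` of `[x, m]` and `v` of `[m, y]`.
  set u := (2⁻¹ : 𝕜) • x + (2⁻¹ : 𝕜) • m
  set v := (2⁻¹ : 𝕜) • m + (2⁻¹ : 𝕜) • y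
  have hu : u ∈ S := hseg x hx y hy hxy
    ⟨(1 + s) / 2, (1 - s) / 2, by linarith, by linarith, by ring, by simp only [u, m]; module⟩
  have hv : v ∈ S := hseg x hx y hy hxy
    ⟨s / 2, 1 - s / 2, by linarith, by linarith, by ring, by simp only [v, m]; module⟩
  have huv : u ≠ v := fun h => hxy <| by
    have : x - y = (2 : 𝕜) • (u - v) := by simp only [u, v]; module
    rwa [h, sub_self, smul_zero, sub_eq_zero] at this
  have hmuv : s • u + (1 - s) • v = m := by simp only [u, v, m]; module
  have hlt := hS.2 hu hv huv hs ht hst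
  have hFu : F u ≤ 2⁻¹ * F x + 2⁻¹ * F m := hD.2 hx hm (by norm_num) (by norm_num) (by norm_num)
  have hFv : F v ≤ 2⁻¹ * F m + 2⁻¹ * F y := hD.2 hm hy (by norm_num) (by norm_num) (by norm_num)
  rw [hmuv, smul_eq_mul, smul_eq_mul] at hlt
  simp only [smul_eq_mul]
  linarith [mul_le_mul_of_nonneg_left hFu hs.le, mul_le_mul_of_nonneg_left hFv ht.le]

namespace IsF1

variable {a b : EReal} {f : ℝ → EReal}

theorem coe_toReal (hf : IsF1 a b f) {x : ℝ} (hx : f x ≠ ⊤) : ((f x).toReal : EReal) = f x :=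
  EReal.coe_toReal hx (hf.ne_bot x)

theorem measurable (hf : IsF1 a b f) : Measurable f :=
  hf.lsc.measurable

theorem coe_mul_add_coe_mul_of_ne_top (hf : IsF1 a b f) {x y : ℝ} (hx : f x ≠ ⊤) (hy : f y ≠ ⊤)
    (t : ℝ) :
    ((t : ℝ) : EReal) * f x + ((1 - t : ℝ) : EReal) * f y
      = ((t * (f x).toReal + (1 - t) * (f y).toReal : ℝ) : EReal) := by
  rw [← hf.coe_toReal hx, ← hf.coe_toReal hy]
  norm_cast

theorem convexOn_toReal (hf : IsF1 a b f) :
    ConvexOn ℝ {x | f x ≠ ⊤} (fun x => (f x).toReal) := by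
  have hcomb : ∀ ⦃x⦄, f x ≠ ⊤ → ∀ ⦃y⦄, f y ≠ ⊤ → ∀ ⦃t : ℝ⦄, 0 < t → t < 1 →
      f (t * x + (1 - t) * y) ≠ ⊤ ∧
        (f (t * x + (1 - t) * y)).toReal ≤ t * (f x).toReal + (1 - t) * (f y).toReal := by
    intro x hx y hy t ht0 ht1
    have h := hf.convex x y t ht0 ht1
    rw [hf.coe_mul_add_coe_mul_of_ne_top hx hy] at h
    exact ⟨ne_top_of_le_ne_top (EReal.coe_ne_top _) h,
      by simpa only [EReal.toReal_coe] using
        EReal.toReal_le_toReal h (hf.ne_bot _) (EReal.coe_ne_top _)⟩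
  refine convexOn_iff_forall_pos.2 ⟨convex_iff_forall_pos.2 ?_, ?_⟩ <;>
    intro x hx y hy s t hs ht hst <;> obtain rfl : t = 1 - s := by linear_combination hst
  · exact (hcomb hx hy hs (by linarith)).1
  · exact (hcomb hx hy hs (by linarith)).2

theorem strictConvexOn_toReal_Ioo (hf : IsF1 a b f) (hsc : StrictConvexOnAB a b f) :
    StrictConvexOn ℝ {x : ℝ | a < x ∧ (x : EReal) < b} (fun x => (f x).toReal) := by
  refine ⟨?_, fun x hx y hy hxy s t hs ht hst => ?_⟩
  · refine OrdConnected.convex ⟨fun x hx y hy z hz => ⟨?_, ?_⟩⟩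
    · exact hx.1.trans_le (EReal.coe_le_coe_iff.2 hz.1)
    · exact (EReal.coe_le_coe_iff.2 hz.2).trans_lt hy.2
  obtain rfl : t = 1 - s := by linear_combination hst
  have h := hsc x y s hx.1 hx.2 hy.1 hy.2 hxy hs (by linarith)
  rw [hf.coe_mul_add_coe_mul_of_ne_top (hf.finite_on x hx.1 hx.2) (hf.finite_on y hy.1 hy.2)] at h
  have hm : f (s * x + (1 - s) * y) ≠ ⊤ := ne_top_of_lt h
  rw [← hf.coe_toReal hm, EReal.coe_lt_coe_iff] at h
  simpa only [smul_eq_mul] using h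

theorem mem_Icc_of_ne_top (hf : IsF1 a b f) {x : ℝ} (hx : f x ≠ ⊤) : (x : EReal) ∈ Icc a b :=
  ⟨not_lt.1 fun h => hx (hf.top_outside x (.inl h)),
    not_lt.1 fun h => hx (hf.top_outside x (.inr h))⟩

theorem openSegment_subset (hf : IsF1 a b f) {x y : ℝ} (hx : f x ≠ ⊤) (hy : f y ≠ ⊤)
    (hxy : x ≠ y) : openSegment ℝ x y ⊆ {z : ℝ | a < z ∧ (z : EReal) < b} := by
  rw [openSegment_eq_Ioo' hxy]
  rintro z ⟨hlo, hhi⟩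
  have hmin : a ≤ (min x y : ℝ) := by
    rcases min_choice x y with h | h <;> rw [h]
    exacts [(hf.mem_Icc_of_ne_top hx).1, (hf.mem_Icc_of_ne_top hy).1]
  have hmax : ((max x y : ℝ) : EReal) ≤ b := by
    rcases max_choice x y with h | h <;> rw [h]
    exacts [(hf.mem_Icc_of_ne_top hx).2, (hf.mem_Icc_of_ne_top hy).2]
  exact ⟨hmin.trans_lt (EReal.coe_lt_coe_iff.2 hlo), (EReal.coe_lt_coe_iff.2 hhi).trans_le hmax⟩

theorem strictConvexOn_toReal (hf : IsF1 a b f) (hsc : StrictConvexOnAB a b f) :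
    StrictConvexOn ℝ {x | f x ≠ ⊤} (fun x => (f x).toReal) :=
  .of_convexOn_of_openSegment_subset hf.convexOn_toReal (hf.strictConvexOn_toReal_Ioo hsc)
    fun _ hx _ hy => hf.openSegment_subset hx hy

/-- The bound comes from the slopes of `f` on either side of the interior point `1`. -/
theorem exists_neg_mul_abs_sub_one_le (hf : IsF1 a b f) :
    ∃ C : ℝ, ∀ x, ((-(C * |x - 1|) : ℝ) : EReal) ≤ f x := by
  obtain ⟨x₀, hax₀, hx₀1⟩ := EReal.exists_between_coe_real hf.a_lt_one
  obtain ⟨x₁, h1x₁, hx₁b⟩ := EReal.exists_between_coe_real hf.one_lt_b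
  have hx₀ : f x₀ ≠ ⊤ := hf.finite_on x₀ hax₀ (hx₀1.trans hf.one_lt_b)
  have hx₁ : f x₁ ≠ ⊤ := hf.finite_on x₁ (hf.a_lt_one.trans h1x₁) hx₁b
  set F := fun x => (f x).toReal
  have h1 : F 1 = 0 := by simp [F, hf.at_one]
  set s₀ := (F 1 - F x₀) / (1 - x₀)
  set s₁ := (F x₁ - F 1) / (x₁ - 1)
  refine ⟨|s₀| + |s₁|, fun x => ?_⟩
  by_cases hx : f x = ⊤
  · simp [hx]
  rw [← hf.coe_toReal hx, EReal.coe_le_coe_iff]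
  have habs : ∀ s : ℝ, s * (x - 1) ≤ |s| * |x - 1| := fun s =>
    (abs_mul s (x - 1)).symm ▸ le_abs_self _
  rcases lt_trichotomy x 1 with hlt | rfl | hgt
  · have h : (F 1 - F x) / (1 - x) ≤ s₁ :=
      hf.convexOn_toReal.slope_mono_adjacent hx hx₁ hlt (by exact_mod_cast h1x₁)
    rw [div_le_iff₀ (sub_pos.2 hlt), h1] at h
    nlinarith [habs (-s₁), abs_neg s₁, abs_nonneg s₀, abs_nonneg (x - 1)]
  · simp [hf.at_one]
  · have h : s₀ ≤ (F x - F 1) / (x - 1) :=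
      hf.convexOn_toReal.slope_mono_adjacent hx₀ hx (by exact_mod_cast hx₀1) hgt
    rw [le_div_iff₀ (sub_pos.2 hgt), h1] at h
    nlinarith [habs (-s₀), abs_neg s₀, abs_nonneg s₁, abs_nonneg (x - 1)]

end IsF1

section EIntegral

theorem posE_of_ne_top {x : EReal} (hx : x ≠ ⊤) : posE x = ENNReal.ofReal x.toReal :=
  if_neg hx

theorem posE_le_ofReal {x : EReal} {r : ℝ} (h : x ≤ r) : posE x ≤ ENNReal.ofReal r := by
  rw [posE_of_ne_top (ne_top_of_le_ne_top (EReal.coe_ne_top r) h)]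
  rcases eq_or_ne x ⊥ with rfl | hx
  · simp
  · exact ENNReal.ofReal_le_ofReal (by simpa using EReal.toReal_le_toReal h hx (EReal.coe_ne_top r))

theorem ofReal_toReal_le_posE (x : EReal) : ENNReal.ofReal x.toReal ≤ posE x := by
  unfold posE; split_ifs <;> simp

theorem enorm_toReal_le_posE_add_posE_neg (x : EReal) : ‖x.toReal‖ₑ ≤ posE x + posE (-x) := by
  rw [Real.enorm_eq_ofReal_abs]
  rcases le_total 0 x.toReal with h | h
  · rw [abs_of_nonneg h]
    exact (ofReal_toReal_le_posE x).trans le_self_add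
  · rw [abs_of_nonpos h, ← EReal.toReal_neg_eq]
    exact (ofReal_toReal_le_posE (-x)).trans le_add_self

theorem measurable_posE : Measurable posE :=
  Measurable.ite (measurableSet_singleton ⊤) measurable_const
    (ENNReal.measurable_ofReal.comp measurable_ereal_toReal)

variable {Ω : Type*} [MeasurableSpace Ω] {P : Measure Ω} {h : Ω → EReal}

theorem integrable_toReal_of_lintegral_posE_ne_top (hm : AEMeasurable h P)
    (hpos : ∫⁻ x, posE (h x) ∂P ≠ ⊤) (hneg : ∫⁻ x, posE (-h x) ∂P ≠ ⊤) :
    Integrable (fun x => (h x).toReal) P := by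
  refine ⟨(measurable_ereal_toReal.comp_aemeasurable hm).aestronglyMeasurable, ?_⟩
  calc ∫⁻ x, ‖(h x).toReal‖ₑ ∂P ≤ ∫⁻ x, (posE (h x) + posE (-h x)) ∂P :=
        lintegral_mono fun x => enorm_toReal_le_posE_add_posE_neg (h x)
    _ = ∫⁻ x, posE (h x) ∂P + ∫⁻ x, posE (-h x) ∂P :=
        lintegral_add_left' (measurable_posE.comp_aemeasurable hm) _
    _ < ⊤ := ENNReal.add_lt_top.2 ⟨hpos.lt_top, hneg.lt_top⟩

theorem ae_ne_top_of_lintegral_posE_ne_top (hm : AEMeasurable h P)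
    (hpos : ∫⁻ x, posE (h x) ∂P ≠ ⊤) : ∀ᵐ x ∂P, h x ≠ ⊤ :=
  (ae_lt_top' (measurable_posE.comp_aemeasurable hm) hpos).mono fun x hx hx' => by
    simp [hx', posE] at hx

theorem lintegral_posE_ne_top_of_eIntegral_lt_top (hneg : ∫⁻ x, posE (-h x) ∂P ≠ ⊤)
    (hlt : eIntegral P h < ⊤) : ∫⁻ x, posE (h x) ∂P ≠ ⊤ := by
  intro htop
  rw [eIntegral, htop, EReal.coe_ennreal_top, EReal.top_sub (by simpa using hneg)] at hlt
  exact lt_irrefl _ hlt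

theorem eIntegral_eq_integral (htop : ∀ᵐ x ∂P, h x ≠ ⊤) (hbot : ∀ᵐ x ∂P, h x ≠ ⊥)
    (hint : Integrable (fun x => (h x).toReal) P) :
    eIntegral P h = ((∫ x, (h x).toReal ∂P : ℝ) : EReal) := by
  have hpos : ∫⁻ x, posE (h x) ∂P = ∫⁻ x, ENNReal.ofReal (h x).toReal ∂P :=
    lintegral_congr_ae (htop.mono fun x hx => posE_of_ne_top hx)
  have hneg : ∫⁻ x, posE (-h x) ∂P = ∫⁻ x, ENNReal.ofReal (-(h x).toReal) ∂P :=
    lintegral_congr_ae <| hbot.mono fun x hx => by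
      simp only [posE_of_ne_top (by simpa using hx : -h x ≠ ⊤), EReal.toReal_neg_eq]
  rw [eIntegral, hpos, hneg, integral_eq_lintegral_pos_part_sub_lintegral_neg_part hint,
    EReal.coe_sub, EReal.coe_ennreal_toReal hint.lintegral_lt_top.ne]
  exact congrArg _ (EReal.coe_ennreal_toReal hint.neg.lintegral_lt_top.ne).symm

end EIntegral

theorem integral_lt_integral_of_ae_le_of_measure_setOf_lt_ne_zero {α : Type*}
    [MeasurableSpace α] {μ : Measure α} {f g : α → ℝ} (hf : Integrable f μ) (hg : Integrable g μ)
    (hfg : f ≤ᵐ[μ] g) (hne : μ {x | f x < g x} ≠ 0) : ∫ x, f x ∂μ < ∫ x, g x ∂μ := by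
  rw [← sub_pos, ← integral_sub hg hf,
    integral_pos_iff_support_of_nonneg_ae (hfg.mono fun _ hx => sub_nonneg.2 hx) (hg.sub hf)]
  exact pos_iff_ne_zero.2 (mt (measure_mono_null fun x hx => (sub_pos.2 hx).ne') hne)

theorem StrictConvexOn.integral_comp_mul_add_mul_lt {α : Type*} [MeasurableSpace α]
    {μ : Measure α} {D : Set ℝ} {F : ℝ → ℝ} (hF : StrictConvexOn ℝ D F) {u w : α → ℝ} {t : ℝ}
    (hu : ∀ᵐ x ∂μ, u x ∈ D) (hw : ∀ᵐ x ∂μ, w x ∈ D)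
    (hFu : Integrable (fun x => F (u x)) μ) (hFw : Integrable (fun x => F (w x)) μ)
    (hFv : Integrable (fun x => F (t * u x + (1 - t) * w x)) μ)
    (hne : μ {x | u x ≠ w x} ≠ 0) (ht0 : 0 < t) (ht1 : t < 1) :
    ∫ x, F (t * u x + (1 - t) * w x) ∂μ < t * ∫ x, F (u x) ∂μ + (1 - t) * ∫ x, F (w x) ∂μ := by
  rw [← integral_const_mul, ← integral_const_mul,
    ← integral_add (hFu.const_mul t) (hFw.const_mul _)]
  refine integral_lt_integral_of_ae_le_of_measure_setOf_lt_ne_zero hFv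
    ((hFu.const_mul t).add (hFw.const_mul _)) ?_ fun h0 => hne (measure_mono_null_ae ?_ h0)
  · filter_upwards [hu, hw] with x hux hwx
    exact hF.convexOn.2 hux hwx ht0.le (sub_nonneg.2 ht1.le) (by ring)
  · filter_upwards [hu, hw] with x hux hwx huw
    exact hF.2 hux hwx huw ht0 (sub_pos.2 ht1) (by ring)

namespace MeasureTheory.Measure

variable {Ω : Type*} [MeasurableSpace Ω]

theorem toReal_rnDeriv_smul_add_smul (μ ν P : Measure Ω) [IsFiniteMeasure μ] [IsFiniteMeasure ν]
    [SigmaFinite P] {s t : ℝ} (hs : 0 ≤ s) (ht : 0 ≤ t) :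
    (fun x => ((ENNReal.ofReal s • μ + ENNReal.ofReal t • ν).rnDeriv P x).toReal)
      =ᵐ[P] fun x => s * (μ.rnDeriv P x).toReal + t * (ν.rnDeriv P x).toReal := by
  have := μ.smul_finite (ENNReal.ofReal_ne_top (r := s))
  have := ν.smul_finite (ENNReal.ofReal_ne_top (r := t))
  filter_upwards [rnDeriv_add (ENNReal.ofReal s • μ) (ENNReal.ofReal t • ν) P,
    rnDeriv_smul_left_of_ne_top μ P (ENNReal.ofReal_ne_top (r := s)),
    rnDeriv_smul_left_of_ne_top ν P (ENNReal.ofReal_ne_top (r := t)),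
    μ.rnDeriv_lt_top P, ν.rnDeriv_lt_top P] with x hadd hμ hν hμx hνx
  simp only [hadd, Pi.add_apply, hμ, hν, Pi.smul_apply, smul_eq_mul]
  rw [ENNReal.toReal_add (ENNReal.mul_ne_top ENNReal.ofReal_ne_top hμx.ne)
      (ENNReal.mul_ne_top ENNReal.ofReal_ne_top hνx.ne),
    ENNReal.toReal_mul, ENNReal.toReal_mul, ENNReal.toReal_ofReal hs, ENNReal.toReal_ofReal ht]

theorem measure_toReal_rnDeriv_ne_ne_zero {μ ν P : Measure Ω} [SigmaFinite μ] [SigmaFinite ν]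
    [SigmaFinite P] (hμ : μ ≪ P) (hν : ν ≪ P) (hne : μ ≠ ν) :
    P {x | (μ.rnDeriv P x).toReal ≠ (ν.rnDeriv P x).toReal} ≠ 0 := by
  refine fun h0 => hne ?_
  rw [← withDensity_rnDeriv_eq μ P hμ, ← withDensity_rnDeriv_eq ν P hν]
  refine withDensity_congr_ae ?_
  filter_upwards [measure_eq_zero_iff_ae_notMem.1 h0, μ.rnDeriv_lt_top P, ν.rnDeriv_lt_top P]
    with x hx hμx hνx
  exact (ENNReal.toReal_eq_toReal_iff' hμx.ne hνx.ne).1 (not_not.1 hx)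

end MeasureTheory.Measure

section FDivergence

variable {Ω : Type*} [MeasurableSpace Ω] {a b : EReal} {f : ℝ → EReal} {P Q : Measure Ω}

theorem absolutelyContinuous_of_fDivE_lt_top (h : fDivE f Q P < ⊤) : Q ≪ P := by
  by_contra hQP
  simp [fDivE, hQP] at h

namespace IsF1

theorem measurable_comp_toReal_rnDeriv (hf : IsF1 a b f) :
    Measurable fun x => f (Q.rnDeriv P x).toReal :=
  hf.measurable.comp (Q.measurable_rnDeriv P).ennreal_toReal

theorem fDivE_eq_integral (hf : IsF1 a b f) (hQP : Q ≪ P)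
    (htop : ∀ᵐ x ∂P, f (Q.rnDeriv P x).toReal ≠ ⊤)
    (hint : Integrable (fun x => (f (Q.rnDeriv P x).toReal).toReal) P) :
    fDivE f Q P = ((∫ x, (f (Q.rnDeriv P x).toReal).toReal ∂P : ℝ) : EReal) := by
  rw [fDivE, if_pos hQP]
  exact eIntegral_eq_integral htop (.of_forall fun _ => hf.ne_bot _) hint

variable [IsFiniteMeasure P] [IsFiniteMeasure Q]

theorem lintegral_posE_neg_ne_top (hf : IsF1 a b f) :
    ∫⁻ x, posE (-f (Q.rnDeriv P x).toReal) ∂P ≠ ⊤ := by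
  obtain ⟨C, hC⟩ := hf.exists_neg_mul_abs_sub_one_le
  have hint : Integrable (fun x => C * |(Q.rnDeriv P x).toReal - 1|) P :=
    (Measure.integrable_toReal_rnDeriv.sub (integrable_const 1)).abs.const_mul C
  refine ne_top_of_le_ne_top hint.lintegral_lt_top.ne (lintegral_mono fun x => posE_le_ofReal ?_)
  rw [EReal.neg_le, ← EReal.coe_neg]
  exact hC _

theorem lintegral_posE_ne_top_of_fDivE_lt_top (hf : IsF1 a b f) (h : fDivE f Q P < ⊤) :
    ∫⁻ x, posE (f (Q.rnDeriv P x).toReal) ∂P ≠ ⊤ := by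
  refine lintegral_posE_ne_top_of_eIntegral_lt_top hf.lintegral_posE_neg_ne_top ?_
  rwa [fDivE, if_pos (absolutelyContinuous_of_fDivE_lt_top h)] at h

theorem ae_ne_top_of_fDivE_lt_top (hf : IsF1 a b f) (h : fDivE f Q P < ⊤) :
    ∀ᵐ x ∂P, f (Q.rnDeriv P x).toReal ≠ ⊤ :=
  ae_ne_top_of_lintegral_posE_ne_top hf.measurable_comp_toReal_rnDeriv.aemeasurable
    (hf.lintegral_posE_ne_top_of_fDivE_lt_top h)

theorem integrable_of_fDivE_lt_top (hf : IsF1 a b f) (h : fDivE f Q P < ⊤) :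
    Integrable (fun x => (f (Q.rnDeriv P x).toReal).toReal) P :=
  integrable_toReal_of_lintegral_posE_ne_top hf.measurable_comp_toReal_rnDeriv.aemeasurable
    (hf.lintegral_posE_ne_top_of_fDivE_lt_top h) hf.lintegral_posE_neg_ne_top

theorem integrable_of_ae_le (hf : IsF1 a b f) {g : Ω → ℝ} (hg : Integrable g P)
    (hle : ∀ᵐ x ∂P, f (Q.rnDeriv P x).toReal ≤ g x) :
    Integrable (fun x => (f (Q.rnDeriv P x).toReal).toReal) P := by
  obtain ⟨C, hC⟩ := hf.exists_neg_mul_abs_sub_one_le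
  have hint : Integrable (fun x => -(C * |(Q.rnDeriv P x).toReal - 1|)) P :=
    ((Measure.integrable_toReal_rnDeriv.sub (integrable_const 1)).abs.const_mul C).neg
  refine integrable_of_le_of_le
    (measurable_ereal_toReal.comp hf.measurable_comp_toReal_rnDeriv).aestronglyMeasurable
    (hle.mono fun x hx => ?_) (hle.mono fun x hx => ?_) hint hg
  · simpa only [EReal.toReal_coe] using EReal.toReal_le_toReal (hC _) (EReal.coe_ne_bot _)
      (ne_top_of_le_ne_top (EReal.coe_ne_top _) hx)
  · simpa using EReal.toReal_le_toReal hx (hf.ne_bot _) (EReal.coe_ne_top _)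

end IsF1

end FDivergence

/-- If `f ∈ F₁(a,b)` is strictly convex on `(a,b)` then `Q ↦ D_f(Q‖P)` is
strictly convex on `{Q : D_f(Q‖P) < ∞}`. -/
theorem stmt3 {Ω : Type*} [MeasurableSpace Ω] (a b : EReal) (f : ℝ → EReal)
    (hf : IsF1 a b f) (hsc : StrictConvexOnAB a b f)
    (P : Measure Ω) [IsProbabilityMeasure P]
    (Q₀ Q₁ : Measure Ω) [IsProbabilityMeasure Q₀] [IsProbabilityMeasure Q₁]
    (hne : Q₀ ≠ Q₁) (h₀ : fDivE f Q₀ P < ⊤) (h₁ : fDivE f Q₁ P < ⊤)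
    (t : ℝ) (ht0 : 0 < t) (ht1 : t < 1) :
    fDivE f (ENNReal.ofReal t • Q₁ + ENNReal.ofReal (1 - t) • Q₀) P
      < ((t : ℝ) : EReal) * fDivE f Q₁ P + (((1 - t : ℝ)) : EReal) * fDivE f Q₀ P := by
  set Q := ENNReal.ofReal t • Q₁ + ENNReal.ofReal (1 - t) • Q₀
  have hQ₀ := absolutelyContinuous_of_fDivE_lt_top h₀
  have hQ₁ := absolutelyContinuous_of_fDivE_lt_top h₁
  have hQ : Q ≪ P := (hQ₁.smul_left _).add_left (hQ₀.smul_left _)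
  have := Q₁.smul_finite (ENNReal.ofReal_ne_top (r := t))
  have := Q₀.smul_finite (ENNReal.ofReal_ne_top (r := 1 - t))
  have hdens := Measure.toReal_rnDeriv_smul_add_smul Q₁ Q₀ P ht0.le (sub_nonneg.2 ht1.le)
  have hD₀ := hf.ae_ne_top_of_fDivE_lt_top h₀
  have hD₁ := hf.ae_ne_top_of_fDivE_lt_top h₁
  have hint₀ := hf.integrable_of_fDivE_lt_top h₀
  have hint₁ := hf.integrable_of_fDivE_lt_top h₁
  have hle : ∀ᵐ x ∂P, f (Q.rnDeriv P x).toReal ≤ ((t * (f (Q₁.rnDeriv P x).toReal).toReal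
      + (1 - t) * (f (Q₀.rnDeriv P x).toReal).toReal : ℝ) : EReal) := by
    filter_upwards [hdens, hD₀, hD₁] with x hx hx₀ hx₁
    rw [show (Q.rnDeriv P x).toReal = _ from hx, ← hf.coe_mul_add_coe_mul_of_ne_top hx₁ hx₀]
    exact hf.convex _ _ t ht0 ht1
  have hintQ := hf.integrable_of_ae_le ((hint₁.const_mul t).add (hint₀.const_mul (1 - t))) hle
  have hcomp : (fun x => (f (Q.rnDeriv P x).toReal).toReal) =ᵐ[P] fun x =>
      (f (t * (Q₁.rnDeriv P x).toReal + (1 - t) * (Q₀.rnDeriv P x).toReal)).toReal :=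
    hdens.fun_comp fun y => (f y).toReal
  rw [hf.fDivE_eq_integral hQ (hle.mono fun _ hx => ne_top_of_le_ne_top (EReal.coe_ne_top _) hx)
      hintQ, hf.fDivE_eq_integral hQ₁ hD₁ hint₁, hf.fDivE_eq_integral hQ₀ hD₀ hint₀,
    integral_congr_ae hcomp]
  exact_mod_cast (hf.strictConvexOn_toReal hsc).integral_comp_mul_add_mul_lt hD₁ hD₀ hint₁ hint₀
    (hintQ.congr hcomp) (Measure.measure_toReal_rnDeriv_ne_ne_zero hQ₁ hQ₀ hne.symm) ht0 ht1
end
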